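/- Collapse of the wave function for unbiased information transfer (trace-distance form): let B ∈ B(K) be self-adjoint, A := T(1 ⊗ B), and Σ := ‖T(1 ⊗ B²) − A²‖^{1/2}. Let ψ_x and ψ_y be unit vectors in H with A ψ_x = x ψ_x and A ψ_y = y ψ_y for real numbers x ≠ y. Then for all complex numbers α, β with |α|² + |β|² = 1 and every orthogonal projection P ∈ B(H), writing ψ := α ψ_x + β ψ_y, one has |⟨ψ, R(P) ψ⟩ − |α|² ⟨ψ_x, R(P) ψ_x⟩ − |β|² ⟨ψ_y, R(P) ψ_y⟩| ≤ (Σ/|x−y|) / √(1 + 4 (Σ/|x−y|)²). -/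

import Mathlib

open ContinuousLinearMap

/-! The Hilbert tensor product `H ⊗ K` is modelled by a Hilbert space `L` together
with two commuting unital ⋆-homomorphisms `ι₁ : B(H) → B(L)` and `ι₂ : B(K) → B(L)`
(playing the roles of `X ↦ X ⊗ 1` and `Y ↦ 1 ⊗ Y`). Given an isometry
`V : H → L`, the quantum operation is `T(X) = V† X V` and its restriction to the
system is `R(P) = T(ι₁ P)`. -/

variable {H K L : Type*}
  [NormedAddCommGroup H] [InnerProductSpace ℂ H] [CompleteSpace H]
  [NormedAddCommGroup K] [InnerProductSpace ℂ K] [CompleteSpace K]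
  [NormedAddCommGroup L] [InnerProductSpace ℂ L] [CompleteSpace L]

/-- The quantum operation `T(X) = V† X V` in Stinespring form. -/
noncomputable def qop (V : H →L[ℂ] L) (X : L →L[ℂ] L) : H →L[ℂ] H :=
  adjoint V ∘L X ∘L V

open scoped InnerProductSpace

/-! Write `φ = V ψ`, `C = 1 ⊗ B` and `S = 2 (P ⊗ 1) - 1`, a unitary commuting with `C`. The
eigenvalue equations make the residuals `C φx - x φx`, `C φy - y φy` orthogonal to `φx`, `φy`
respectively, with norms at most `Σ`. Since `S` commutes with `C`,
`(x - y) ⟨φx, S φy⟩ = ⟨S† φx, C φy - y φy⟩ - ⟨C φx - x φx, S φy⟩`, and by orthogonality the unit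
vectors `S† φx`, `S φy` may be replaced by their components orthogonal to `φy`, `φx`, of norm
`√(1 - r²)` where `r = |⟨φx, S φy⟩|`. Hence `|x - y| r ≤ 2 Σ √(1 - r²)`. As `φx ⊥ φy`, the
interference term on the left-hand side is `2 Re (conj α β ⟨φx, (P ⊗ 1) φy⟩)`, of modulus at most
`r / 2`, and solving the quadratic inequality for `r` gives the bound. -/

section InnerProductSpace

variable {E : Type*} [NormedAddCommGroup E] [InnerProductSpace ℂ E]

theorem norm_sub_inner_smul_sq {u : E} (hu : ‖u‖ = 1) (w : E) :
    ‖w - ⟪u, w⟫_ℂ • u‖ ^ 2 = ‖w‖ ^ 2 - ‖⟪u, w⟫_ℂ‖ ^ 2 := by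
  have hre : RCLike.re ⟪w, ⟪u, w⟫_ℂ • u⟫_ℂ = ‖⟪u, w⟫_ℂ‖ ^ 2 := by
    rw [inner_smul_right, ← inner_conj_symm w u, RCLike.mul_conj]
    norm_cast
  rw [@norm_sub_sq ℂ, hre, norm_smul, hu]
  ring

theorem norm_inner_le_of_inner_eq_zero {u g : E} (hu : ‖u‖ = 1) (hg : ⟪u, g⟫_ℂ = 0) (w : E) :
    ‖⟪g, w⟫_ℂ‖ ≤ ‖g‖ * √(‖w‖ ^ 2 - ‖⟪u, w⟫_ℂ‖ ^ 2) := by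
  have hgu : ⟪g, u⟫_ℂ = 0 := by rw [← inner_conj_symm, hg, map_zero]
  have hproj : ⟪g, w⟫_ℂ = ⟪g, w - ⟪u, w⟫_ℂ • u⟫_ℂ := by
    rw [inner_sub_right, inner_smul_right, hgu, mul_zero, sub_zero]
  rw [hproj, ← norm_sub_inner_smul_sq hu, Real.sqrt_sq (norm_nonneg _)]
  exact norm_inner_le_norm _ _

theorem inner_eq_zero_of_apply_eq_smul [CompleteSpace E] {A : E →L[ℂ] E} (hA : IsSelfAdjoint A)
    {u v : E} {μ ν : ℂ} (hu : A u = μ • u) (hv : A v = ν • v) (hμν : μ ≠ ν) : ⟪u, v⟫_ℂ = 0 :=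
  hA.isSymmetric.orthogonalFamily_eigenspaces hμν
    ⟨u, Module.End.mem_eigenspace_iff.mpr hu⟩ ⟨v, Module.End.mem_eigenspace_iff.mpr hv⟩

theorem inner_sub_smul_eq_zero {u w : E} {c : ℂ} (hu : ‖u‖ = 1) (h : ⟪u, w⟫_ℂ = c) :
    ⟪u, w - c • u⟫_ℂ = 0 := by
  rw [inner_sub_right, inner_smul_right, inner_self_eq_norm_sq_to_K, hu, h]
  simp

theorem abs_sub_mul_norm_inner_le [CompleteSpace E] {C S : E →L[ℂ] E} (hC : IsSelfAdjoint C)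
    (hS : S ∈ unitary (E →L[ℂ] E)) (hSC : Commute S C) {u v : E} {x y σ : ℝ}
    (hu : ‖u‖ = 1) (hv : ‖v‖ = 1) (hux : ⟪u, C u⟫_ℂ = x) (hvy : ⟪v, C v⟫_ℂ = y)
    (hσu : ‖C u - (x : ℂ) • u‖ ≤ σ) (hσv : ‖C v - (y : ℂ) • v‖ ≤ σ) :
    |x - y| * ‖⟪u, S v⟫_ℂ‖ ≤ 2 * σ * √(1 - ‖⟪u, S v⟫_ℂ‖ ^ 2) := by
  set c := ⟪u, S v⟫_ℂ
  have hS' : ‖adjoint S u‖ = 1 := by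
    rw [← star_eq_adjoint, norm_map_of_mem_unitary (Unitary.star_mem hS), hu]
  have hcommute : ⟪C u, S v⟫_ℂ = ⟪adjoint S u, C v⟫_ℂ :=
    calc ⟪C u, S v⟫_ℂ = ⟪u, C (S v)⟫_ℂ := hC.isSymmetric u (S v)
      _ = ⟪u, S (C v)⟫_ℂ := by
        rw [← mul_apply_eq_comp, ← hSC.eq, mul_apply_eq_comp]
      _ = ⟪adjoint S u, C v⟫_ℂ := (adjoint_inner_left S (C v) u).symm
  have hSu : ⟪adjoint S u, v⟫_ℂ = c := adjoint_inner_left S v u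
  have hkey : ((x : ℂ) - y) * c =
      ⟪adjoint S u, C v - (y : ℂ) • v⟫_ℂ - ⟪C u - (x : ℂ) • u, S v⟫_ℂ := by
    rw [inner_sub_right, inner_sub_left, inner_smul_right, inner_smul_left, hSu, hcommute,
      Complex.conj_ofReal]
    ring
  have hboundu : ‖⟪C u - (x : ℂ) • u, S v⟫_ℂ‖ ≤ σ * √(1 - ‖c‖ ^ 2) := by
    have h := norm_inner_le_of_inner_eq_zero hu (inner_sub_smul_eq_zero hu hux) (S v)
    rw [norm_map_of_mem_unitary hS, hv, one_pow] at h
    exact h.trans (by gcongr)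
  have hboundv : ‖⟪adjoint S u, C v - (y : ℂ) • v⟫_ℂ‖ ≤ σ * √(1 - ‖c‖ ^ 2) := by
    have h := norm_inner_le_of_inner_eq_zero hv (inner_sub_smul_eq_zero hv hvy) (adjoint S u)
    rw [hS', one_pow, adjoint_inner_right S v u, norm_inner_symm (S v) u] at h
    rw [norm_inner_symm]
    exact h.trans (by gcongr)
  calc |x - y| * ‖c‖ = ‖((x : ℂ) - y) * c‖ := by
        rw [norm_mul, ← Complex.ofReal_sub, Complex.norm_real, Real.norm_eq_abs]
    _ ≤ σ * √(1 - ‖c‖ ^ 2) + σ * √(1 - ‖c‖ ^ 2) := by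
        rw [hkey]
        exact (norm_sub_le _ _).trans (add_le_add hboundv hboundu)
    _ = 2 * σ * √(1 - ‖c‖ ^ 2) := by ring

theorem norm_inner_superposition_sub_le [CompleteSpace E] {Q : E →L[ℂ] E} (hQ : IsSelfAdjoint Q)
    (u v : E) (α β : ℂ) :
    ‖⟪α • u + β • v, Q (α • u + β • v)⟫_ℂ - (‖α‖ ^ 2 : ℂ) * ⟪u, Q u⟫_ℂ -
        (‖β‖ ^ 2 : ℂ) * ⟪v, Q v⟫_ℂ‖ ≤ 2 * ‖α‖ * ‖β‖ * ‖⟪u, Q v⟫_ℂ‖ := by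
  have hvu : ⟪v, Q u⟫_ℂ = starRingEnd ℂ ⟪u, Q v⟫_ℂ := by
    rw [← inner_conj_symm v (Q u)]
    exact congrArg _ (hQ.isSymmetric u v)
  have hexpand : ⟪α • u + β • v, Q (α • u + β • v)⟫_ℂ - (‖α‖ ^ 2 : ℂ) * ⟪u, Q u⟫_ℂ -
      (‖β‖ ^ 2 : ℂ) * ⟪v, Q v⟫_ℂ =
      starRingEnd ℂ α * β * ⟪u, Q v⟫_ℂ + starRingEnd ℂ β * α * starRingEnd ℂ ⟪u, Q v⟫_ℂ := by
    simp only [map_add, map_smul, inner_add_left, inner_add_right, inner_smul_left,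
      inner_smul_right, hvu]
    linear_combination ⟪u, Q u⟫_ℂ * RCLike.conj_mul α + ⟪v, Q v⟫_ℂ * RCLike.conj_mul β
  rw [hexpand]
  refine (norm_add_le _ _).trans (le_of_eq ?_)
  simp only [norm_mul, RCLike.norm_conj]
  ring

end InnerProductSpace

theorem div_two_le_of_mul_le_two_mul_sqrt {d σ r : ℝ} (hd : 0 < d) (hσ : 0 ≤ σ) (hr : 0 ≤ r)
    (h : d * r ≤ 2 * σ * √(1 - r ^ 2)) : r / 2 ≤ σ / d / √(1 + 4 * (σ / d) ^ 2) := by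
  have hr1 : 0 ≤ 1 - r ^ 2 := by
    by_contra hneg
    rw [Real.sqrt_eq_zero_of_nonpos (not_le.mp hneg).le, mul_zero] at h
    nlinarith
  have hsq : (d * r) ^ 2 ≤ (2 * σ) ^ 2 * (1 - r ^ 2) := by
    calc (d * r) ^ 2 ≤ (2 * σ * √(1 - r ^ 2)) ^ 2 := by gcongr
      _ = (2 * σ) ^ 2 * (1 - r ^ 2) := by rw [mul_pow, Real.sq_sqrt hr1]
  have hM : 0 < √(1 + 4 * (σ / d) ^ 2) := Real.sqrt_pos.mpr (by positivity)
  rw [div_le_div_iff₀ two_pos hM, ← Real.sqrt_sq hr, ← Real.sqrt_mul (sq_nonneg r),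
    Real.sqrt_le_left (by positivity)]
  field_simp
  nlinarith

section Stinespring

theorem inner_qop_apply (V : H →L[ℂ] L) (X : L →L[ℂ] L) (ψ χ : H) :
    ⟪ψ, qop V X χ⟫_ℂ = ⟪V ψ, X (V χ)⟫_ℂ :=
  adjoint_inner_right V ψ (X (V χ))

theorem IsSelfAdjoint.qop {X : L →L[ℂ] L} (hX : IsSelfAdjoint X) (V : H →L[ℂ] L) :
    IsSelfAdjoint (qop V X) :=
  hX.adjoint_conj V

theorem inner_apply_eq_of_qop_apply_eq_smul {V : H →L[ℂ] L} {C : L →L[ℂ] L} {ψ : H}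
    (hψ : ‖ψ‖ = 1) {t : ℝ} (ht : qop V C ψ = (t : ℂ) • ψ) : ⟪V ψ, C (V ψ)⟫_ℂ = t := by
  rw [← inner_qop_apply, ht, inner_smul_right, inner_self_eq_norm_sq_to_K, hψ]
  simp

/-- The squared residual is `⟨ψ, (T(C²) - T(C)²) ψ⟩`, the Kadison–Schwarz defect at `ψ`. -/
theorem norm_apply_sub_smul_le_sqrt {V : H →L[ℂ] L} (hV : adjoint V ∘L V = 1) {C : L →L[ℂ] L}
    (hC : IsSelfAdjoint C) {ψ : H} (hψ : ‖ψ‖ = 1) {t : ℝ} (ht : qop V C ψ = (t : ℂ) • ψ) :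
    ‖C (V ψ) - (t : ℂ) • V ψ‖ ≤ √‖qop V (C ^ 2) - qop V C ^ 2‖ := by
  set D := qop V (C ^ 2) - qop V C ^ 2
  have hψψ : ⟪ψ, ψ⟫_ℂ = 1 := by rw [inner_self_eq_norm_sq_to_K, hψ]; simp
  have hVψ : ⟪V ψ, V ψ⟫_ℂ = 1 := by rw [V.inner_map_map_iff_adjoint_comp_self.mpr hV, hψψ]
  have hCψ : ⟪V ψ, C (V ψ)⟫_ℂ = t := inner_apply_eq_of_qop_apply_eq_smul hψ ht
  have hCψ' : ⟪C (V ψ), V ψ⟫_ℂ = t := (hC.isSymmetric _ _).trans hCψ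
  have hC2 : ⟪ψ, qop V (C ^ 2) ψ⟫_ℂ = ⟪C (V ψ), C (V ψ)⟫_ℂ := by
    rw [inner_qop_apply, pow_two, mul_apply_eq_comp]
    exact (hC.isSymmetric _ _).symm
  have hA2 : ⟪ψ, (qop V C ^ 2) ψ⟫_ℂ = (t : ℂ) ^ 2 := by
    rw [pow_two, mul_apply_eq_comp, ht, map_smul, ht, smul_smul, inner_smul_right,
      hψψ, mul_one, pow_two]
  have hD : ⟪ψ, D ψ⟫_ℂ = ⟪C (V ψ), C (V ψ)⟫_ℂ - (t : ℂ) ^ 2 := by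
    rw [sub_apply, inner_sub_right, hC2, hA2]
  have hresidual : ⟪C (V ψ) - (t : ℂ) • V ψ, C (V ψ) - (t : ℂ) • V ψ⟫_ℂ = ⟪ψ, D ψ⟫_ℂ := by
    rw [hD, inner_sub_left, inner_sub_right, inner_sub_right, inner_smul_left, inner_smul_right,
      inner_smul_right, inner_smul_left, hCψ, hCψ', hVψ, Complex.conj_ofReal]
    ring
  refine Real.le_sqrt_of_sq_le ?_
  calc ‖C (V ψ) - (t : ℂ) • V ψ‖ ^ 2 = RCLike.re ⟪ψ, D ψ⟫_ℂ := by
        rw [← hresidual, inner_self_eq_norm_sq]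
    _ ≤ ‖ψ‖ * ‖D ψ‖ := re_inner_le_norm _ _
    _ ≤ ‖D‖ := by simpa [hψ] using D.le_opNorm ψ

end Stinespring

/-- Collapse of the wave function for unbiased information transfer
(trace-distance form): with `A := T(1 ⊗ B)`, `Σ := ‖T(1 ⊗ B²) − A²‖^(1/2)`,
eigenvectors `A ψx = x ψx`, `A ψy = y ψy` (`x ≠ y`), `|α|² + |β|² = 1` and
`ψ := α ψx + β ψy`, every orthogonal projection `P` satisfies
`|⟨ψ, R(P) ψ⟩ − |α|² ⟨ψx, R(P) ψx⟩ − |β|² ⟨ψy, R(P) ψy⟩| ≤ (Σ/|x−y|)/√(1+4(Σ/|x−y|)²)`. -/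
theorem collapse_unbiased
    (ι₁ : (H →L[ℂ] H) →⋆ₐ[ℂ] (L →L[ℂ] L)) (ι₂ : (K →L[ℂ] K) →⋆ₐ[ℂ] (L →L[ℂ] L))
    (hcomm : ∀ X Y, ι₁ X * ι₂ Y = ι₂ Y * ι₁ X)
    (V : H →L[ℂ] L) (hV : adjoint V ∘L V = 1)
    (B : K →L[ℂ] K) (hB : IsSelfAdjoint B)
    (ψx ψy : H) (hψx : ‖ψx‖ = 1) (hψy : ‖ψy‖ = 1)
    (x y : ℝ) (hxy : x ≠ y)
    (hx : qop V (ι₂ B) ψx = (x : ℂ) • ψx) (hy : qop V (ι₂ B) ψy = (y : ℂ) • ψy)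
    (α β : ℂ) (hαβ : ‖α‖ ^ 2 + ‖β‖ ^ 2 = 1) :
    ∀ P : H →L[ℂ] H, IsIdempotentElem P → IsSelfAdjoint P →
      ‖⟪α • ψx + β • ψy, qop V (ι₁ P) (α • ψx + β • ψy)⟫_ℂ -
          (‖α‖ ^ 2 : ℂ) * ⟪ψx, qop V (ι₁ P) ψx⟫_ℂ -
          (‖β‖ ^ 2 : ℂ) * ⟪ψy, qop V (ι₁ P) ψy⟫_ℂ‖ ≤
        (Real.sqrt ‖qop V (ι₂ (B ^ 2)) - qop V (ι₂ B) ^ 2‖ / |x - y|) /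
          Real.sqrt (1 + 4 * (Real.sqrt ‖qop V (ι₂ (B ^ 2)) - qop V (ι₂ B) ^ 2‖ / |x - y|) ^ 2) := by
  intro P hP hPsa
  set C := ι₂ B
  set Q := ι₁ P
  have hC : IsSelfAdjoint C := hB.map ι₂
  have hQ : IsStarProjection Q := (IsStarProjection.mk hP hPsa).map ι₁
  have hVnorm : ∀ ψ, ‖V ψ‖ = ‖ψ‖ := V.norm_map_iff_adjoint_comp_self.mpr hV
  have horth : ⟪V ψx, V ψy⟫_ℂ = 0 := by
    rw [V.inner_map_map_iff_adjoint_comp_self.mpr hV]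
    exact inner_eq_zero_of_apply_eq_smul (hC.qop V) hx hy (by exact_mod_cast hxy)
  have hσ (ψ : H) (hψ : ‖ψ‖ = 1) (t : ℝ) (ht : qop V C ψ = (t : ℂ) • ψ) :
      ‖C (V ψ) - (t : ℂ) • V ψ‖ ≤ √‖qop V (ι₂ (B ^ 2)) - qop V C ^ 2‖ := by
    simpa only [map_pow] using norm_apply_sub_smul_le_sqrt hV hC hψ ht
  have hSC : Commute (2 * Q - 1) C :=
    ((Commute.ofNat_left 2 C).mul_left (hcomm P B)).sub_left (Commute.one_left C)
  have hr := abs_sub_mul_norm_inner_le hC hQ.two_mul_sub_one_mem_unitary hSC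
    ((hVnorm ψx).trans hψx) ((hVnorm ψy).trans hψy) (inner_apply_eq_of_qop_apply_eq_smul hψx hx)
    (inner_apply_eq_of_qop_apply_eq_smul hψy hy) (hσ ψx hψx x hx) (hσ ψy hψy y hy)
  have hS : ⟪V ψx, (2 * Q - 1) (V ψy)⟫_ℂ = 2 * ⟪ψx, qop V Q ψy⟫_ℂ := by
    rw [inner_qop_apply, two_mul, sub_apply, add_apply, one_apply_eq_self, inner_sub_right,
      inner_add_right, horth]
    ring
  rw [hS, norm_mul, Complex.norm_two] at hr
  calc _ ≤ 2 * ‖α‖ * ‖β‖ * ‖⟪ψx, qop V Q ψy⟫_ℂ‖ :=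
        norm_inner_superposition_sub_le (hQ.isSelfAdjoint.qop V) ψx ψy α β
    _ ≤ 2 * ‖⟪ψx, qop V Q ψy⟫_ℂ‖ / 2 := by
        nlinarith [two_mul_le_add_sq ‖α‖ ‖β‖, norm_nonneg ⟪ψx, qop V Q ψy⟫_ℂ]
    _ ≤ _ := div_two_le_of_mul_le_two_mul_sqrt (abs_pos.mpr (sub_ne_zero.mpr hxy))
        (Real.sqrt_nonneg _) (by positivity) hr
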